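/- Let A be a ⊖-algebra with negation ¬a := 1 ⊖ a and define a ⊕ b := ¬(¬a ⊖ b). Suppose that for all a, b, c ∈ A: (i) (a ⊖ b) ⊖ c = a ⊖ ¬(¬b ⊖ c), (ii) ¬a ⊖ b = ¬b ⊖ a, and (iii) a ∧ b = a ⊖ (a ⊖ b). Then ⊕ is commutative and associative, ¬ is an involution (¬¬a = a for all a), and ⊖ is the right co-residual of ⊕, i.e. for all a, b, c ∈ A: a ≤ b ⊕ c if and only if a ⊖ c ≤ b. -/
import Mathlib


class OminusAlgebra (A : Type*) extends DistribLattice A, BoundedOrder A where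
  ominus : A → A → A
  inf_ominus : ∀ a b c : A, ominus (a ⊓ b) c = ominus a c ⊓ ominus b c
  sup_ominus : ∀ a b c : A, ominus (a ⊔ b) c = ominus a c ⊔ ominus b c
  ominus_inf : ∀ a b c : A, ominus a (b ⊓ c) = ominus a b ⊔ ominus a c
  ominus_sup : ∀ a b c : A, ominus a (b ⊔ c) = ominus a b ⊓ ominus a c
  bot_ominus : ∀ a : A, ominus ⊥ a = ⊥
  ominus_top : ∀ a : A, ominus a ⊤ = ⊥
  ominus_bot : ∀ a : A, ominus a ⊥ = a

infixl:65 " ⊖ " => OminusAlgebra.ominus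

variable {A : Type*} [OminusAlgebra A]

def oneg (a : A) : A := ⊤ ⊖ a

def oplus (a b : A) : A := oneg (oneg a ⊖ b)

def IsPrimeIdeal (x : Set A) : Prop :=
  x.Nonempty ∧ (∀ a b : A, a ≤ b → b ∈ x → a ∈ x) ∧
    (∀ a b : A, a ∈ x → b ∈ x → a ⊔ b ∈ x) ∧ x ≠ Set.univ ∧
    (∀ a b : A, a ⊓ b ∈ x → a ∈ x ∨ b ∈ x)

def ineg (x : Set A) : Set A := {a | oneg a ∉ x}

def domPlus (x y : Set A) : Prop := y ⊆ ineg x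

def pplus (x y : Set A) : Set A := {a | ∃ b ∈ y, a ⊖ b ∈ x}

def domStar (x y : Set A) : Prop := ¬ ineg x ⊆ y

def pstar (x y : Set A) : Set A := {a | ∀ b ∉ y, a ⊖ b ∈ x}

open OminusAlgebra in
lemma aux_mono {a b : A} (c : A) (h : a ≤ b) : a ⊖ c ≤ b ⊖ c := by
  have e : a ⊖ c = (a ⊓ b) ⊖ c := by rw [inf_eq_left.mpr h]
  rw [e, inf_ominus]; exact inf_le_right

open OminusAlgebra in
lemma aux_anti (a : A) {b c : A} (h : c ≤ b) : a ⊖ b ≤ a ⊖ c := by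
  have e : a ⊖ c = a ⊖ (b ⊓ c) := by rw [inf_eq_right.mpr h]
  rw [e, ominus_inf]; exact le_sup_left

lemma aux_neg_anti {a b : A} (h : a ≤ b) : oneg b ≤ oneg a := aux_anti ⊤ h

open OminusAlgebra in
lemma aux_invol (h3 : ∀ a b : A, a ⊓ b = a ⊖ (a ⊖ b)) (a : A) :
    oneg (oneg a) = a := by
  have := h3 ⊤ a
  rw [top_inf_eq] at this
  simp only [oneg]
  exact this.symm

open OminusAlgebra in
lemma aux_self (h3 : ∀ a b : A, a ⊓ b = a ⊖ (a ⊖ b)) (a : A) :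
    a ⊖ a = ⊥ := by
  have := h3 a ⊥
  rw [ominus_bot, inf_bot_eq] at this
  exact this.symm

open OminusAlgebra in
lemma aux_unit (h1 : ∀ a b c : A, (a ⊖ b) ⊖ c = a ⊖ oneg (oneg b ⊖ c))
    (h3 : ∀ a b : A, a ⊓ b = a ⊖ (a ⊖ b)) (a c : A) :
    a ≤ oplus (a ⊖ c) c := by
  have e1 : a ⊖ oplus (a ⊖ c) c = ⊥ := by
    rw [oplus, ← h1, ← h3, inf_ominus, aux_self h3, inf_bot_eq]
  have e2 := h3 a (oplus (a ⊖ c) c)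
  rw [e1, ominus_bot] at e2
  exact inf_eq_left.mp e2

open OminusAlgebra in
lemma aux_counit (h1 : ∀ a b c : A, (a ⊖ b) ⊖ c = a ⊖ oneg (oneg b ⊖ c))
    (h3 : ∀ a b : A, a ⊓ b = a ⊖ (a ⊖ b)) (b c : A) :
    oplus b c ⊖ c ≤ b := by
  have e : oplus b c ⊖ c = oneg (oplus (oneg b ⊖ c) c) := by
    rw [oplus, oplus, aux_invol h3]
  rw [e]
  calc oneg (oplus (oneg b ⊖ c) c) ≤ oneg (oneg b) :=
        aux_neg_anti (aux_unit h1 h3 (oneg b) c)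
    _ = b := aux_invol h3 b

theorem stmt1 {A : Type*} [OminusAlgebra A]
    (h1 : ∀ a b c : A, (a ⊖ b) ⊖ c = a ⊖ oneg (oneg b ⊖ c))
    (h2 : ∀ a b : A, oneg a ⊖ b = oneg b ⊖ a)
    (h3 : ∀ a b : A, a ⊓ b = a ⊖ (a ⊖ b)) :
    (∀ a b : A, oplus a b = oplus b a) ∧
    (∀ a b c : A, oplus (oplus a b) c = oplus a (oplus b c)) ∧
    (∀ a : A, oneg (oneg a) = a) ∧
    (∀ a b c : A, a ≤ oplus b c ↔ a ⊖ c ≤ b) := by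
  refine ⟨fun a b => by rw [oplus, oplus, h2], ?_, aux_invol h3, ?_⟩
  · intro a b c
    have key : oneg (oplus (oplus a b) c) = oneg (oplus a (oplus b c)) := by
      have l : ∀ x y : A, oneg (oplus x y) = oneg x ⊖ y := fun x y => by
        rw [oplus, aux_invol h3]
      rw [l, l, l, oplus, ← h1]
    calc oplus (oplus a b) c = oneg (oneg (oplus (oplus a b) c)) :=
          (aux_invol h3 _).symm
      _ = oneg (oneg (oplus a (oplus b c))) := by rw [key]
      _ = oplus a (oplus b c) := aux_invol h3 _
  · intro a b c
    constructor
    · intro h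
      exact le_trans (aux_mono c h) (aux_counit h1 h3 b c)
    · intro h
      refine le_trans (aux_unit h1 h3 a c) ?_
      rw [oplus, oplus]
      exact aux_neg_anti (aux_mono c (aux_neg_anti h))
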